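/- For every s ∈ ℝ and every integer n ≥ 1: all coefficients A_{n,k}(s) are non-negative, and the sequence {A_{n,k}(s)}_{k=0}^{n} is log-concave, i.e. A_{n,k}(s)² ≥ A_{n,k-1}(s) · A_{n,k+1}(s) for all 1 ≤ k ≤ n−1; consequently it is unimodal with at most two modes. -/

import Mathlib

open Finset Polynomial MeasureTheory Filter

/-- The polynomials `Pₙˢ`, defined by `P₀ˢ = 1` and
`Pₙˢ(x) = (x / nˢ) · ∑_{k=0}^{n-1} Pₖˢ(x)` for `n ≥ 1`. -/
noncomputable def Pp (s : ℝ) : ℕ → Polynomial ℝ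
  | 0 => 1
  | n + 1 => Polynomial.C ((((n + 1 : ℕ)) : ℝ) ^ s)⁻¹ * Polynomial.X *
      ∑ k ∈ (Finset.range (n + 1)).attach, Pp s k.1
  decreasing_by exact Finset.mem_range.mp k.2

/-- `A_{n,k}(s)` : the coefficient of `x^k` in `Pₙˢ(x)`. -/
noncomputable def A (n k : ℕ) (s : ℝ) : ℝ := (Pp s n).coeff k

/-!
Summing the recursion telescopes: `∑_{k ≤ n} Pₖˢ = ∏_{j=1}^{n} (1 + x / jˢ)`, hence
`Pₙ₊₁ˢ = x / (n+1)ˢ · ∏_{j=1}^{n} (1 + x / jˢ)`. Multiplying a positive, strictly log-concave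
coefficient sequence by `1 + c x` with `c > 0` keeps it positive and strictly log-concave, so the
coefficients of the product, and those of `Pₙˢ`, are strictly log-concave. A non-negative strictly
log-concave sequence keeps decreasing once it has stopped increasing, which gives a mode; and two
maxima `x + 2 ≤ y` would force `a x = a (x+1) = a (x+2)`, contradicting strictness.
-/

structure PosStrictLogConcave (a : ℕ → ℝ) (m : ℕ) : Prop where
  pos : ∀ k ≤ m, 0 < a k
  eq_zero : ∀ k, m < k → a k = 0
  mul_lt_sq : ∀ k, k + 2 ≤ m → a k * a (k + 2) < a (k + 1) ^ 2

namespace PosStrictLogConcave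

variable {a b : ℕ → ℝ} {m : ℕ}

lemma nonneg (h : PosStrictLogConcave a m) (k : ℕ) : 0 ≤ a k := by
  rcases le_or_gt k m with hk | hk
  · exact (h.pos k hk).le
  · exact (h.eq_zero k hk).ge

lemma mul_le_sq (h : PosStrictLogConcave a m) (k : ℕ) : a k * a (k + 2) ≤ a (k + 1) ^ 2 := by
  rcases le_or_gt (k + 2) m with hk | hk
  · exact (h.mul_lt_sq k hk).le
  · rw [h.eq_zero (k + 2) hk, mul_zero]
    positivity

lemma mul_le_mul_succ (h : PosStrictLogConcave a m) (k : ℕ) :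
    a k * a (k + 3) ≤ a (k + 1) * a (k + 2) := by
  rcases le_or_gt (k + 3) m with hk | hk
  · have hprod := mul_lt_mul'' (h.mul_lt_sq k (by omega)) (h.mul_lt_sq (k + 1) (by omega))
      (mul_nonneg (h.nonneg _) (h.nonneg _)) (mul_nonneg (h.nonneg _) (h.nonneg _))
    have hfac : 0 < a (k + 1) * a (k + 2) := mul_pos (h.pos _ (by omega)) (h.pos _ (by omega))
    refine (lt_of_mul_lt_mul_right ?_ hfac.le).le
    calc a k * a (k + 3) * (a (k + 1) * a (k + 2))
        = a k * a (k + 2) * (a (k + 1) * a (k + 3)) := by ring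
      _ < a (k + 1) ^ 2 * a (k + 2) ^ 2 := hprod
      _ = a (k + 1) * a (k + 2) * (a (k + 1) * a (k + 2)) := by ring
  · rw [h.eq_zero (k + 3) hk, mul_zero]
    exact mul_nonneg (h.nonneg _) (h.nonneg _)

lemma add_mul_prev (h : PosStrictLogConcave a m) {c : ℝ} (hc : 0 < c) (hb₀ : b 0 = a 0)
    (hb : ∀ k, b (k + 1) = a (k + 1) + c * a k) : PosStrictLogConcave b (m + 1) where
  pos k hk := by
    cases k with
    | zero => exact hb₀ ▸ h.pos 0 m.zero_le
    | succ k => exact hb k ▸ add_pos_of_nonneg_of_pos (h.nonneg _) (mul_pos hc (h.pos k (by omega)))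
  eq_zero k hk := by
    obtain ⟨k, rfl⟩ : ∃ j, k = j + 1 := ⟨k - 1, by omega⟩
    rw [hb, h.eq_zero (k + 1) (by omega), h.eq_zero k (by omega), mul_zero, add_zero]
  mul_lt_sq k hk := by
    cases k with
    | zero =>
      rw [hb₀, hb, hb]
      nlinarith [h.mul_le_sq 0, mul_nonneg (mul_nonneg hc.le (h.nonneg 0)) (h.nonneg 1),
        mul_pos (mul_pos hc hc) (mul_pos (h.pos 0 m.zero_le) (h.pos 0 m.zero_le))]
    | succ k =>
      rw [hb, hb, hb]
      nlinarith [h.mul_le_sq (k + 1), mul_le_mul_of_nonneg_left (h.mul_le_mul_succ k) hc.le,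
        mul_lt_mul_of_pos_left (h.mul_lt_sq k (by omega)) (mul_pos hc hc)]

end PosStrictLogConcave

lemma PosStrictLogConcave.coeff_mul_one_add_C_mul_X {p : ℝ[X]} {m : ℕ}
    (h : PosStrictLogConcave p.coeff m) {c : ℝ} (hc : 0 < c) :
    PosStrictLogConcave (p * (1 + C c * X)).coeff (m + 1) := by
  have hp : p * (1 + C c * X) = p + C c * p * X := by ring
  refine h.add_mul_prev hc ?_ fun k ↦ ?_
  · simp [hp]
  · simp [hp, coeff_C_mul]

theorem posStrictLogConcave_coeff_prod_one_add_C_mul_X {c : ℕ → ℝ} (hc : ∀ i, 0 < c i) (m : ℕ) :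
    PosStrictLogConcave (∏ i ∈ range m, (1 + C (c i) * X)).coeff m := by
  induction m with
  | zero => exact ⟨by simp, fun k hk ↦ by simp [coeff_one, hk.ne'], by omega⟩
  | succ m ih =>
    rw [prod_range_succ]
    exact ih.coeff_mul_one_add_C_mul_X (hc m)

lemma le_of_mul_lt_sq {x y z : ℝ} (hy : 0 ≤ y) (hxz : x * z < y ^ 2) (hyx : y ≤ x) : z ≤ y := by
  by_contra! hzy
  nlinarith [mul_le_mul hyx hzy.le hy (hy.trans hyx)]

lemma Nat.ncard_le_two_of_forall_le_add_one {S : Set ℕ} (h : ∀ x ∈ S, ∀ y ∈ S, y ≤ x + 1) :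
    S.ncard ≤ 2 := by
  rcases S.eq_empty_or_nonempty with rfl | hne
  · simp
  have hsub : S ⊆ {sInf S, sInf S + 1} := fun x hx ↦ by
    have := h _ (Nat.sInf_mem hne) x hx
    have := Nat.sInf_le hx
    rcases (by omega : x = sInf S ∨ x = sInf S + 1) with rfl | rfl <;> simp
  exact (Set.ncard_le_ncard hsub (Set.toFinite _)).trans (Set.ncard_pair (by omega)).le

section Unimodal

variable {a : ℕ → ℝ} {n : ℕ}

lemma antitoneOn_Icc_of_mul_lt_sq (hnn : ∀ k ≤ n, 0 ≤ a k)
    (hlc : ∀ k, k + 2 ≤ n → a k * a (k + 2) < a (k + 1) ^ 2) {m : ℕ}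
    (hm : m = n ∨ a (m + 1) ≤ a m) : AntitoneOn a (Set.Icc m n) := by
  have step : ∀ k, m ≤ k → k + 1 ≤ n → a (k + 1) ≤ a k := by
    intro k hmk
    induction k, hmk using Nat.le_induction with
    | base => exact fun hmn ↦ hm.resolve_left (by omega)
    | succ k _ ih => exact fun hk ↦ le_of_mul_lt_sq (hnn _ (by omega)) (hlc k hk) (ih (by omega))
  exact antitoneOn_of_add_one_le Set.ordConnected_Icc fun k _ hk hk₁ ↦ step k hk.1 hk₁.2

theorem exists_monotoneOn_antitoneOn_of_mul_lt_sq (hnn : ∀ k ≤ n, 0 ≤ a k)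
    (hlc : ∀ k, k + 2 ≤ n → a k * a (k + 2) < a (k + 1) ^ 2) :
    ∃ m ≤ n, MonotoneOn a (Set.Iic m) ∧ AntitoneOn a (Set.Icc m n) := by
  classical
  have hex : ∃ m, m = n ∨ a (m + 1) ≤ a m := ⟨n, Or.inl rfl⟩
  refine ⟨Nat.find hex, Nat.find_min' hex (Or.inl rfl), ?_,
    antitoneOn_Icc_of_mul_lt_sq hnn hlc (Nat.find_spec hex)⟩
  refine monotoneOn_of_le_add_one Set.ordConnected_Iic fun k _ _ hk ↦ ?_
  exact (not_le.mp (not_or.mp (Nat.find_min hex (Order.add_one_le_iff.mp hk))).2).le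

theorem ncard_setOf_isMax_le_two_of_mul_lt_sq (hnn : ∀ k ≤ n, 0 ≤ a k)
    (hlc : ∀ k, k + 2 ≤ n → a k * a (k + 2) < a (k + 1) ^ 2) :
    {k : ℕ | k ≤ n ∧ ∀ j ≤ n, a j ≤ a k}.ncard ≤ 2 := by
  refine Nat.ncard_le_two_of_forall_le_add_one ?_
  rintro x ⟨hxn, hx⟩ y ⟨hyn, hy⟩
  by_contra! hxy
  -- `a` is antitone past the maximum `x`, hence constant on `[x, y]`
  have hanti := antitoneOn_Icc_of_mul_lt_sq hnn hlc (Or.inr (hx (x + 1) (by omega)))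
  have h₁ : a (x + 1) = a x := le_antisymm (hx _ (by omega)) <| (hy x hxn).trans <|
    hanti ⟨by omega, by omega⟩ ⟨by omega, hyn⟩ (by omega)
  have h₂ : a (x + 2) = a x := le_antisymm (hx _ (by omega)) <| (hy x hxn).trans <|
    hanti ⟨by omega, by omega⟩ ⟨by omega, hyn⟩ (by omega)
  have := hlc x (by omega)
  rw [h₁, h₂, sq] at this
  exact lt_irrefl _ this

end Unimodal

noncomputable def invPow (s : ℝ) (j : ℕ) : ℝ := (((j + 1 : ℕ) : ℝ) ^ s)⁻¹

lemma invPow_pos (s : ℝ) (j : ℕ) : 0 < invPow s j := by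
  unfold invPow
  positivity

lemma Pp_succ (s : ℝ) (n : ℕ) :
    Pp s (n + 1) = C (invPow s n) * X * ∑ k ∈ range (n + 1), Pp s k := by
  rw [Pp, sum_attach]
  rfl

lemma sum_range_succ_Pp (s : ℝ) (n : ℕ) :
    ∑ k ∈ range (n + 1), Pp s k = ∏ j ∈ range n, (1 + C (invPow s j) * X) := by
  induction n with
  | zero => simp [Pp]
  | succ n ih => rw [sum_range_succ, Pp_succ, ih, prod_range_succ]; ring

lemma A_succ_zero (s : ℝ) (n : ℕ) : A (n + 1) 0 s = 0 := by
  simp [A, Pp_succ]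

lemma A_succ_succ (s : ℝ) (n k : ℕ) :
    A (n + 1) (k + 1) s = invPow s n * (∏ j ∈ range n, (1 + C (invPow s j) * X)).coeff k := by
  rw [A, Pp_succ, sum_range_succ_Pp, mul_assoc, coeff_C_mul, coeff_X_mul]

lemma A_nonneg (s : ℝ) (n k : ℕ) : 0 ≤ A n k s := by
  rcases n with _ | n
  · simp only [A, Pp, coeff_one]
    split_ifs <;> norm_num
  rcases k with _ | k
  · rw [A_succ_zero]
  · rw [A_succ_succ]
    exact mul_nonneg (invPow_pos s n).le
      ((posStrictLogConcave_coeff_prod_one_add_C_mul_X (invPow_pos s) n).nonneg k)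

lemma A_mul_lt_sq (s : ℝ) {n k : ℕ} (hk : k + 2 ≤ n) :
    A n k s * A n (k + 2) s < A n (k + 1) s ^ 2 := by
  obtain ⟨n, rfl⟩ : ∃ m, n = m + 1 := ⟨n - 1, by omega⟩
  have hQ := posStrictLogConcave_coeff_prod_one_add_C_mul_X (invPow_pos s) n
  have hc := invPow_pos s n
  rcases k with _ | k
  · rw [A_succ_zero, zero_mul, A_succ_succ]
    exact pow_pos (mul_pos hc (hQ.pos 0 n.zero_le)) 2
  · rw [A_succ_succ, A_succ_succ, A_succ_succ, mul_mul_mul_comm, mul_pow, ← sq]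
    exact mul_lt_mul_of_pos_left (hQ.mul_lt_sq k (by omega)) (pow_pos hc 2)

theorem coeff_nonneg_logConcave_unimodal_general (s : ℝ) (n : ℕ) :
    (∀ k : ℕ, 0 ≤ A n k s) ∧
    (∀ k : ℕ, 1 ≤ k → k ≤ n - 1 → A n (k - 1) s * A n (k + 1) s ≤ (A n k s) ^ 2) ∧
    (∃ m : ℕ, m ≤ n ∧ (∀ i j : ℕ, i ≤ j → j ≤ m → A n i s ≤ A n j s) ∧
      (∀ i j : ℕ, m ≤ i → i ≤ j → j ≤ n → A n j s ≤ A n i s)) ∧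
    {k : ℕ | k ≤ n ∧ ∀ j : ℕ, j ≤ n → A n j s ≤ A n k s}.ncard ≤ 2 := by
  have hnn : ∀ k ≤ n, 0 ≤ A n k s := fun k _ ↦ A_nonneg s n k
  have hlc : ∀ k, k + 2 ≤ n → A n k s * A n (k + 2) s < A n (k + 1) s ^ 2 :=
    fun _ hk ↦ A_mul_lt_sq s hk
  obtain ⟨m, hmn, hmono, hanti⟩ := exists_monotoneOn_antitoneOn_of_mul_lt_sq hnn hlc
  refine ⟨fun k ↦ A_nonneg s n k, fun k hk hkn ↦ ?_,
    ⟨m, hmn, fun i j hij hjm ↦ hmono (hij.trans hjm) hjm hij,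
      fun i j hmi hij hjn ↦ hanti ⟨hmi, hij.trans hjn⟩ ⟨hmi.trans hij, hjn⟩ hij⟩,
    ncard_setOf_isMax_le_two_of_mul_lt_sq hnn hlc⟩
  obtain ⟨k, rfl⟩ : ∃ j, k = j + 1 := ⟨k - 1, by omega⟩
  simpa using (hlc k (by omega)).le

/-- For every `s ∈ ℝ` and `n ≥ 1`, the coefficients `A_{n,k}(s)` are non-negative and
log-concave in `k`; consequently `{A_{n,k}(s)}_{k=0}^n` is unimodal with at most two
modes. -/
theorem coeff_nonneg_logConcave_unimodal (s : ℝ) (n : ℕ) (hn : 1 ≤ n) :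
    (∀ k : ℕ, 0 ≤ A n k s) ∧
    (∀ k : ℕ, 1 ≤ k → k ≤ n - 1 → A n (k - 1) s * A n (k + 1) s ≤ (A n k s) ^ 2) ∧
    (∃ m : ℕ, m ≤ n ∧ (∀ i j : ℕ, i ≤ j → j ≤ m → A n i s ≤ A n j s) ∧
      (∀ i j : ℕ, m ≤ i → i ≤ j → j ≤ n → A n j s ≤ A n i s)) ∧
    {k : ℕ | k ≤ n ∧ ∀ j : ℕ, j ≤ n → A n j s ≤ A n k s}.ncard ≤ 2 :=
  coeff_nonneg_logConcave_unimodal_general s n
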